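/- In the braid group of type B₂, i.e. the group with presentation ⟨σ₁, σ₂ ∣ σ₁σ₂σ₁σ₂ = σ₂σ₁σ₂σ₁⟩, the center equals the cyclic subgroup generated by the element Δ_B = (σ₁σ₂)². -/

import Mathlib

/-- Relator of the braid group of type `B₂`: `(σ₁σ₂)²(σ₂σ₁)⁻²`. -/
def B2BraidRels : Set (FreeGroup (Fin 2)) :=
  { (FreeGroup.of 0 * FreeGroup.of 1) ^ 2 * ((FreeGroup.of 1 * FreeGroup.of 0) ^ 2)⁻¹ }

/-!
`Δ = (σ₁σ₂)²` is central because the relation lets both generators pass through it. Conversely,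
`σ₁ ↦ t`, `σ₂ ↦ t⁻¹s` defines a homomorphism to `ℤ ∗ ℤ/2 = ⟨t⟩ ∗ ⟨s⟩` sending `σ₁σ₂` to `s`;
since `(σ₁σ₂)² = Δ`, the assignment `t ↦ σ₁`, `s ↦ σ₁σ₂` is a left inverse modulo `⟨Δ⟩`, so the
kernel lies in `⟨Δ⟩`. A central element maps to an element commuting with `t` and with `s`, and in
a free product only `1` commutes with nontrivial elements `x`, `y` of two different factors: if the
last letter of a nonempty reduced word `w` is not from the factor of `x`, then `w x w⁻¹` is a
reduced word longer than `x`.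
-/

open Monoid CoprodI

namespace Monoid.CoprodI

variable {ι : Type*} [DecidableEq ι] {G : ι → Type*} [∀ i, Group (G i)] [∀ i, DecidableEq (G i)]

theorem NeWord.toList_eq_of_prod_eq {i j k l : ι} (w₁ : NeWord G i j) (w₂ : NeWord G k l)
    (h : w₁.prod = w₂.prod) : w₁.toList = w₂.toList :=
  congrArg Word.toList (Word.equiv.symm.injective h)

theorem NeWord.not_commute_prod_of {i j k : ι} (w : NeWord G i j) {x : G k} (hx : x ≠ 1)
    (hjk : j ≠ k) : ¬Commute w.prod (of x) := by
  intro hcomm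
  have hconj : ((w.append hjk (.singleton x hx)).append hjk.symm w.inv).prod =
      (NeWord.singleton x hx).prod := by
    simp [hcomm.eq, mul_assoc]
  have hlen := congrArg List.length (toList_eq_of_prod_eq _ _ hconj)
  simp only [NeWord.toList, List.length_append, List.length_singleton] at hlen
  exact w.toList_ne_nil (List.eq_nil_of_length_eq_zero (by omega))

theorem eq_one_of_commute_of_commute {i j : ι} (hij : i ≠ j) {x : G i} {y : G j} (hx : x ≠ 1)
    (hy : y ≠ 1) {g : CoprodI G} (hgx : Commute g (of x)) (hgy : Commute g (of y)) : g = 1 := by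
  by_contra hg
  have hword : Word.equiv g ≠ .empty := fun h => hg (by
    rw [← Word.equiv.symm_apply_apply g, h]; exact Word.prod_empty)
  obtain ⟨k, l, w, hw⟩ := NeWord.of_word _ hword
  have hwg : w.prod = g := by rw [NeWord.prod, hw]; exact Word.equiv.symm_apply_apply g
  rcases eq_or_ne l i with rfl | hli
  · exact w.not_commute_prod_of hy hij (hwg ▸ hgy)
  · exact w.not_commute_prod_of hx hli (hwg ▸ hgx)

end Monoid.CoprodI

theorem Subgroup.normal_of_le_center {G : Type*} [Group G] {H : Subgroup G}
    (hH : H ≤ Subgroup.center G) : H.Normal :=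
  ⟨fun n hn g => by rwa [Subgroup.mem_center_iff.mp (hH hn) g, mul_inv_cancel_right]⟩

def ZMod.liftMul {N : Type*} [Group N] (n : ℕ) (g : N) (hg : g ^ n = 1) :
    Multiplicative (ZMod n) →* N :=
  AddMonoidHom.toMultiplicativeLeft <| ZMod.lift n
    ⟨zmultiplesHom _ (Additive.ofMul g), by simpa [← ofMul_zpow] using congrArg Additive.ofMul hg⟩

theorem ZMod.liftMul_ofAdd_one {N : Type*} [Group N] (n : ℕ) (g : N) (hg : g ^ n = 1) :
    ZMod.liftMul n g hg (.ofAdd 1) = g := by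
  have h : ZMod.liftMul n g hg (.ofAdd ((1 : ℤ) : ZMod n)) = g ^ (1 : ℤ) := by
    simp only [ZMod.liftMul, AddMonoidHom.coe_toMultiplicativeLeft, Function.comp_apply,
      toAdd_ofAdd, ZMod.lift_coe]
    rfl
  simpa using h

namespace B2Braid

/-- Since `ZMod 0 = ℤ`, the free product of these factors is `ℤ ∗ ℤ/2`. -/
abbrev CyclicFactor (i : Fin 2) : Type := Multiplicative (ZMod (![0, 2] i))

abbrev IntFreeProdZModTwo : Type := CoprodI CyclicFactor

def t : IntFreeProdZModTwo := of (i := 0) (.ofAdd 1)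
def s : IntFreeProdZModTwo := of (i := 1) (.ofAdd 1)

theorem s_mul_s : s * s = 1 := by
  rw [s, ← map_mul]
  exact map_one _

theorem eq_one_of_commute_t_of_commute_s {g : IntFreeProdZModTwo} (ht : Commute g t)
    (hs : Commute g s) : g = 1 :=
  eq_one_of_commute_of_commute (by decide) (by decide) (by decide) ht hs

def σ₁ : PresentedGroup B2BraidRels := .of 0
def σ₂ : PresentedGroup B2BraidRels := .of 1
def Δ : PresentedGroup B2BraidRels := (σ₁ * σ₂) ^ 2

theorem braid_relation : (σ₁ * σ₂) ^ 2 = (σ₂ * σ₁) ^ 2 := by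
  have h := PresentedGroup.one_of_mem (rels := B2BraidRels) rfl
  simp only [map_mul, map_pow, map_inv, mul_inv_eq_one] at h
  exact h

theorem commute_σ₁_Δ : Commute σ₁ Δ :=
  calc σ₁ * Δ = σ₁ * (σ₂ * σ₁) ^ 2 := by rw [Δ, braid_relation]
    _ = Δ * σ₁ := by simp only [Δ, sq, mul_assoc]

theorem commute_σ₂_Δ : Commute σ₂ Δ :=
  calc σ₂ * Δ = (σ₂ * σ₁) ^ 2 * σ₂ := by simp only [Δ, sq, mul_assoc]
    _ = Δ * σ₂ := by rw [Δ, braid_relation]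

theorem Δ_mem_center : Δ ∈ Subgroup.center (PresentedGroup B2BraidRels) := by
  have hcent (g : PresentedGroup B2BraidRels) : g ∈ Subgroup.centralizer {Δ} :=
    PresentedGroup.generated_by _ _ (Fin.forall_fin_two.mpr
      ⟨Subgroup.mem_centralizer_singleton_iff.mpr commute_σ₁_Δ,
        Subgroup.mem_centralizer_singleton_iff.mpr commute_σ₂_Δ⟩) g
  exact Subgroup.mem_center_iff.mpr fun g => Subgroup.mem_centralizer_singleton_iff.mp (hcent g)

instance : (Subgroup.zpowers Δ).Normal :=
  Subgroup.normal_of_le_center (Subgroup.zpowers_le.mpr Δ_mem_center)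

def toFreeProd : PresentedGroup B2BraidRels →* IntFreeProdZModTwo :=
  PresentedGroup.toGroup (f := ![t, t⁻¹ * s]) <| by
    rintro r rfl
    simp only [map_mul, map_pow, map_inv, FreeGroup.lift_apply_of, Matrix.cons_val_zero,
      Matrix.cons_val_one]
    simp [sq, mul_assoc, ← mul_assoc s s, s_mul_s]

theorem toFreeProd_σ₁ : toFreeProd σ₁ = t :=
  PresentedGroup.toGroup.of _

theorem toFreeProd_σ₂ : toFreeProd σ₂ = t⁻¹ * s :=
  PresentedGroup.toGroup.of _

theorem toFreeProd_σ₁_mul_σ₂ : toFreeProd (σ₁ * σ₂) = s := by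
  rw [map_mul, toFreeProd_σ₁, toFreeProd_σ₂, mul_inv_cancel_left]

def ofFreeProd : IntFreeProdZModTwo →* PresentedGroup B2BraidRels ⧸ Subgroup.zpowers Δ :=
  CoprodI.lift fun i => ZMod.liftMul _ (QuotientGroup.mk (![σ₁, σ₁ * σ₂] i)) <| by
    fin_cases i
    · exact pow_zero _
    · exact (QuotientGroup.eq_one_iff _).mpr (Subgroup.mem_zpowers Δ)

theorem ofFreeProd_comp_toFreeProd :
    ofFreeProd.comp toFreeProd = QuotientGroup.mk' (Subgroup.zpowers Δ) := by
  have ht : ofFreeProd t = σ₁ := by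
    rw [ofFreeProd, t, CoprodI.lift_of]
    exact ZMod.liftMul_ofAdd_one _ _ _
  have hs : ofFreeProd s = ↑(σ₁ * σ₂) := by
    rw [ofFreeProd, s, CoprodI.lift_of]
    exact ZMod.liftMul_ofAdd_one _ _ _
  refine PresentedGroup.ext (Fin.forall_fin_two.mpr ⟨?_, ?_⟩)
  · exact (congrArg _ toFreeProd_σ₁).trans ht
  · change ofFreeProd (toFreeProd σ₂) = σ₂
    rw [toFreeProd_σ₂, map_mul, map_inv, ht, hs, ← QuotientGroup.mk_inv,
      ← QuotientGroup.mk_mul, inv_mul_cancel_left]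

theorem ker_toFreeProd_le : toFreeProd.ker ≤ Subgroup.zpowers Δ := by
  intro g hg
  rw [← QuotientGroup.eq_one_iff, ← QuotientGroup.mk'_apply, ← ofFreeProd_comp_toFreeProd,
    MonoidHom.comp_apply, hg, map_one]

end B2Braid

theorem stmt_15 :
    Subgroup.center (PresentedGroup B2BraidRels) =
      Subgroup.zpowers
        (((PresentedGroup.of 0 : PresentedGroup B2BraidRels) * PresentedGroup.of 1) ^ 2) := by
  refine le_antisymm (fun g hg => B2Braid.ker_toFreeProd_le ?_)
    (Subgroup.zpowers_le.mpr B2Braid.Δ_mem_center)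
  have hcomm (h : PresentedGroup B2BraidRels) :
      Commute (B2Braid.toFreeProd g) (B2Braid.toFreeProd h) :=
    (Commute.symm (Subgroup.mem_center_iff.mp hg h)).map _
  exact B2Braid.eq_one_of_commute_t_of_commute_s (B2Braid.toFreeProd_σ₁ ▸ hcomm B2Braid.σ₁)
    (B2Braid.toFreeProd_σ₁_mul_σ₂ ▸ hcomm (B2Braid.σ₁ * B2Braid.σ₂))
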